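/- Let (a_n) be a non-increasing sequence of positive reals with ∑ a_n < ∞ and set r_n = ∑_{m=n}^∞ a_m. If there exists δ ∈ (0,1) such that a_n^{δ-1}·r_n → 0 as n → ∞, then for every c > δ the series ∑ a_n^c converges. -/

import Mathlib

/-!
Write `a n = r n - r (n + 1)`. For `0 < p ≤ 1`, concavity of `x ↦ x ^ p` gives
`p (r n - r (n + 1)) r n ^ (p - 1) ≤ r n ^ p - r (n + 1) ^ p`, so the series
`∑ a n · r n ^ (p - 1)` telescopes and converges (Dini). Eventually `a n ≤ 1` and
`r n ≤ a n ^ (1 - δ)`, whence `a n · r n ^ (p - 1) ≥ a n ^ (1 + (1 - δ)(p - 1))`; choosing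
`p = min 1 ((c - δ) / (1 - δ))` makes this exponent at most `c`, so it dominates `a n ^ c`.
-/

namespace Real

theorem mul_sub_mul_rpow_sub_one_le_rpow_sub_rpow {x y p : ℝ} (hy : 0 ≤ y) (hyx : y ≤ x)
    (hp0 : 0 ≤ p) (hp1 : p ≤ 1) : p * (x - y) * x ^ (p - 1) ≤ x ^ p - y ^ p := by
  rcases (hy.trans hyx).eq_or_lt with rfl | hx
  · obtain rfl : y = 0 := le_antisymm hyx hy
    simp
  have hyx' : -1 ≤ y / x - 1 := by linarith [div_nonneg hy hx.le]
  have bernoulli := rpow_one_add_le_one_add_mul_self hyx' hp0 hp1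
  rw [add_sub_cancel, div_rpow hy hx.le, div_le_iff₀ (rpow_pos_of_pos hx p)] at bernoulli
  have hxp : (y / x - 1) * x ^ p = (y - x) * x ^ (p - 1) := by
    rw [rpow_sub_one hx.ne']
    field_simp
  nlinarith

theorem rpow_le_mul_rpow_sub_one_of_le_rpow {a r q p c : ℝ} (ha0 : 0 < a) (ha1 : a ≤ 1)
    (hr0 : 0 < r) (hra : r ≤ a ^ q) (hp : p ≤ 1) (hc : 1 + q * (p - 1) ≤ c) :
    a ^ c ≤ a * r ^ (p - 1) :=
  calc a ^ c ≤ a ^ (1 + q * (p - 1)) := rpow_le_rpow_of_exponent_ge ha0 ha1 hc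
    _ = a * (a ^ q) ^ (p - 1) := by rw [rpow_add ha0, rpow_one, rpow_mul ha0.le]
    _ ≤ a * r ^ (p - 1) :=
      mul_le_mul_of_nonneg_left (rpow_le_rpow_of_nonpos hr0 hra (by linarith)) ha0.le

end Real

theorem summable_sub_mul_rpow_sub_one_of_antitone {r : ℕ → ℝ} (hr : Antitone r)
    (hr0 : ∀ n, 0 ≤ r n) {p : ℝ} (hp0 : 0 < p) (hp1 : p ≤ 1) :
    Summable fun n => (r n - r (n + 1)) * r n ^ (p - 1) := by
  have hterm : ∀ n, 0 ≤ (r n - r (n + 1)) * r n ^ (p - 1) := fun n =>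
    mul_nonneg (sub_nonneg.2 (hr n.le_succ)) (Real.rpow_nonneg (hr0 n) _)
  refine summable_of_sum_range_le hterm (c := r 0 ^ p / p) fun n => ?_
  rw [le_div_iff₀ hp0, Finset.sum_mul]
  calc ∑ i ∈ Finset.range n, (r i - r (i + 1)) * r i ^ (p - 1) * p
      ≤ ∑ i ∈ Finset.range n, (r i ^ p - r (i + 1) ^ p) := by
        refine Finset.sum_le_sum fun i _ => ?_
        have := Real.mul_sub_mul_rpow_sub_one_le_rpow_sub_rpow (hr0 (i + 1)) (hr i.le_succ)
          hp0.le hp1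
        linarith
    _ = r 0 ^ p - r n ^ p := Finset.sum_range_sub' (fun i => r i ^ p) n
    _ ≤ r 0 ^ p := sub_le_self _ (Real.rpow_nonneg (hr0 n) _)

theorem tsum_nat_add_eq_add_tsum_nat_add_succ {G : Type*} [AddCommGroup G] [TopologicalSpace G]
    [IsTopologicalAddGroup G] [T2Space G] {a : ℕ → G} (ha : Summable a) (n : ℕ) :
    ∑' m, a (n + m) = a n + ∑' m, a (n + 1 + m) := by
  have htail : Summable fun m => a (n + m) := by
    simpa only [add_comm n] using (summable_nat_add_iff n).2 ha
  rw [htail.tsum_eq_zero_add, add_zero]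
  simp only [add_assoc, add_comm 1]

theorem stmt_17_general (a : ℕ → ℝ) (hpos : ∀ n, 0 < a n)
    (hsum : Summable a)
    (r : ℕ → ℝ) (hr : ∀ n, r n = ∑' m : ℕ, a (n + m))
    (δ : ℝ) (hδ1 : δ < 1)
    (h : Filter.Tendsto (fun n : ℕ => a n ^ (δ - 1) * r n) Filter.atTop (nhds 0)) :
    ∀ c : ℝ, δ < c → Summable (fun n : ℕ => a n ^ c) := by
  intro c hc
  have hrec : ∀ n, r n = a n + r (n + 1) := fun n => by
    rw [hr, hr, tsum_nat_add_eq_add_tsum_nat_add_succ hsum]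
  have hr0 : ∀ n, 0 < r n := fun n => by
    rw [hrec, hr]
    exact add_pos_of_pos_of_nonneg (hpos n) (tsum_nonneg fun m => (hpos _).le)
  set p := min 1 ((c - δ) / (1 - δ))
  have hp0 : 0 < p := lt_min one_pos (div_pos (by linarith) (by linarith))
  have hpc : 1 + (1 - δ) * (p - 1) ≤ c := by
    have : (1 - δ) * p ≤ c - δ :=
      (le_div_iff₀' (by linarith)).1 (min_le_right 1 ((c - δ) / (1 - δ)))
    linarith
  have hdini := summable_sub_mul_rpow_sub_one_of_antitone
    (antitone_nat_of_succ_le fun n => by linarith [hrec n, hpos n]) (fun n => (hr0 n).le) hp0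
    (min_le_left _ _)
  refine hdini.of_norm_bounded_eventually_nat ?_
  filter_upwards [h.eventually_lt_const one_pos,
    hsum.tendsto_atTop_zero.eventually_le_const one_pos] with n hn han
  have hra : r n ≤ a n ^ (1 - δ) := by
    rw [← lt_div_iff₀' (Real.rpow_pos_of_pos (hpos n) _), one_div, ← Real.rpow_neg (hpos n).le,
      neg_sub] at hn
    exact hn.le
  rw [Real.norm_of_nonneg (Real.rpow_nonneg (hpos n).le _), show r n - r (n + 1) = a n by
    linarith [hrec n]]
  exact Real.rpow_le_mul_rpow_sub_one_of_le_rpow (hpos n) han (hr0 n) hra (min_le_left _ _) hpc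

theorem stmt_17 (a : ℕ → ℝ) (hpos : ∀ n, 0 < a n) (hmono : Antitone a)
    (hsum : Summable a)
    (r : ℕ → ℝ) (hr : ∀ n, r n = ∑' m : ℕ, a (n + m))
    (δ : ℝ) (hδ0 : 0 < δ) (hδ1 : δ < 1)
    (h : Filter.Tendsto (fun n : ℕ => a n ^ (δ - 1) * r n) Filter.atTop (nhds 0)) :
    ∀ c : ℝ, δ < c → Summable (fun n : ℕ => a n ^ c) :=
  stmt_17_general a hpos hsum r hr δ hδ1 h
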